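/- Let E₈ ⊆ ℝ² be the octagon given as the convex hull of the eight points (1,0), (2,0), (3,1), (3,2), (2,3), (1,3), (0,2), (0,1). Then E₈ + ℤ² is a seven-fold lattice tiling of ℝ². -/

import Mathlib

open Set

/-- `K + Λ` is a `k`-fold tiling of `ℝⁿ`. -/
def IsKFoldTiling {n : ℕ} (K Λ : Set (Fin n → ℝ)) (k : ℕ) : Prop :=
  ∀ x : Fin n → ℝ,
    (k : ℕ∞) ≤ {v | v ∈ Λ ∧ x - v ∈ K}.encard ∧
    {v | v ∈ Λ ∧ x - v ∈ interior K}.encard ≤ (k : ℕ∞)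

/-- The integer lattice `ℤⁿ ⊆ ℝⁿ`. -/
def intLattice (n : ℕ) : Set (Fin n → ℝ) := {v | ∀ i, ∃ m : ℤ, v i = m}

/-- The octagon `E₈` with vertices `(1,0), (2,0), (3,1), (3,2), (2,3), (1,3),
(0,2), (0,1)`. -/
noncomputable def E₈ : Set (Fin 2 → ℝ) :=
  convexHull ℝ ({![1, 0], ![2, 0], ![3, 1], ![3, 2],
    ![2, 3], ![1, 3], ![0, 2], ![0, 1]} : Set (Fin 2 → ℝ))

/-!
Write `x = z + f` with `z ∈ ℤ²` and `f ∈ [0,1)²`; the lattice translates `E₈ + v` containing `x`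
correspond, via `v = z - w`, to the offsets `w ∈ ℤ²` with `f + w ∈ E₈`. As `E₈` is the square
`[0,3]²` cut by `1 ≤ u₀ + u₁ ≤ 5` and `|u₀ - u₁| ≤ 2`, such offsets lie in `{0,1,2}²`, and of the
nine candidates exactly one corner of each diagonal pair is cut off: `(0,0)` or `(2,2)` according
as `f₀ + f₁ < 1` or not, and `(2,0)` or `(0,2)` according as `f₁ ≤ f₀` or not. The other seven
offsets put `f + w` into `E₈`, and only they can put it into its interior.
-/

theorem interior_preimage_Icc_subset {E : Type*} [AddCommGroup E] [Module ℝ E]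
    [TopologicalSpace E] [IsTopologicalAddGroup E] [ContinuousSMul ℝ E]
    (φ : E →ₗ[ℝ] ℝ) (hφ : φ ≠ 0) (a b : ℝ) :
    interior (φ ⁻¹' Icc a b) ⊆ φ ⁻¹' Ioo a b := by
  rw [← interior_Icc]
  exact (φ.isOpenMap_of_finiteDimensional (LinearMap.surjective hφ))
    |>.interior_preimage_subset_preimage_interior

theorem Convex.lineMap_lineMap_mem {E : Type*} [AddCommGroup E] [Module ℝ E] {C : Set E}
    (hC : Convex ℝ C) {p q p' q' : E} (hp : p ∈ C) (hq : q ∈ C) (hp' : p' ∈ C) (hq' : q' ∈ C)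
    {a b : ℝ} (ha : a ∈ Icc 0 1) (hb : b ∈ Icc 0 1) :
    AffineMap.lineMap (AffineMap.lineMap p q a) (AffineMap.lineMap p' q' a) b ∈ C :=
  hC.lineMap_mem (hC.lineMap_mem hp hq ha) (hC.lineMap_mem hp' hq' ha) hb

theorem encard_intLattice_translates {n : ℕ} (K : Set (Fin n → ℝ)) (x : Fin n → ℝ) :
    {v | v ∈ intLattice n ∧ x - v ∈ K}.encard =
      {w : Fin n → ℤ | (fun i => Int.fract (x i) + w i) ∈ K}.encard := by
  let g : (Fin n → ℤ) → Fin n → ℝ := fun w i => ((⌊x i⌋ - w i : ℤ) : ℝ)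
  have hg : Function.Injective g := fun w w' h => funext fun i => by
    simpa [g] using congrFun h i
  have hx : ∀ w, x - g w = fun i => Int.fract (x i) + w i := fun w => funext fun i => by
    simp only [g, Pi.sub_apply, Int.cast_sub, Int.fract]
    ring
  have hlat : intLattice n = range g := by
    ext v
    refine ⟨fun hv => ?_, ?_⟩
    · choose m hm using hv
      exact ⟨fun i => ⌊x i⌋ - m i, funext fun i => by simp [g, hm]⟩
    · rintro ⟨w, rfl⟩ i
      exact ⟨_, rfl⟩
  rw [← hg.injOn.encard_image, hlat]
  congr 1
  ext v
  simp only [mem_ofPred_eq, mem_range, mem_image]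
  constructor
  · rintro ⟨⟨w, rfl⟩, hw⟩
    exact ⟨w, hx w ▸ hw, rfl⟩
  · rintro ⟨w, hw, rfl⟩
    exact ⟨⟨w, rfl⟩, (hx w).symm ▸ hw⟩

def octagon : Set (Fin 2 → ℝ) :=
  {u | u 0 ∈ Icc 0 3 ∧ u 1 ∈ Icc 0 3 ∧ u 0 + u 1 ∈ Icc 1 5 ∧ u 0 - u 1 ∈ Icc (-2) 2}

def openOctagon : Set (Fin 2 → ℝ) :=
  {u | u 0 ∈ Ioo 0 3 ∧ u 1 ∈ Ioo 0 3 ∧ u 0 + u 1 ∈ Ioo 1 5 ∧ u 0 - u 1 ∈ Ioo (-2) 2}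

theorem octagon_eq_inter_preimage :
    let x := LinearMap.proj (R := ℝ) (φ := fun _ : Fin 2 => ℝ) 0
    let y := LinearMap.proj (R := ℝ) (φ := fun _ : Fin 2 => ℝ) 1
    octagon = x ⁻¹' Icc 0 3 ∩ (y ⁻¹' Icc 0 3 ∩ ((x + y) ⁻¹' Icc 1 5 ∩ (x - y) ⁻¹' Icc (-2) 2)) :=
  rfl

theorem convex_octagon : Convex ℝ octagon := by
  rw [octagon_eq_inter_preimage]
  exact ((convex_Icc _ _).linear_preimage _).inter (((convex_Icc _ _).linear_preimage _).inter
    (((convex_Icc _ _).linear_preimage _).inter ((convex_Icc _ _).linear_preimage _)))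

theorem interior_octagon_subset : interior octagon ⊆ openOctagon := by
  have ne_zero : ∀ φ : (Fin 2 → ℝ) →ₗ[ℝ] ℝ, (φ ![1, 0] ≠ 0 ∨ φ ![0, 1] ≠ 0) → φ ≠ 0 := by
    rintro φ h rfl
    simp at h
  rw [octagon_eq_inter_preimage]
  simp only [interior_inter]
  refine inter_subset_inter (interior_preimage_Icc_subset _ (ne_zero _ (by simp)) _ _) <|
    inter_subset_inter (interior_preimage_Icc_subset _ (ne_zero _ (by simp)) _ _) <|
    inter_subset_inter (interior_preimage_Icc_subset _ (ne_zero _ (by simp)) _ _)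
      (interior_preimage_Icc_subset _ (ne_zero _ (by simp)) _ _)

theorem E₈_subset_octagon : E₈ ⊆ octagon := by
  refine convexHull_min ?_ convex_octagon
  simp only [insert_subset_iff, singleton_subset_iff]
  norm_num [octagon]

theorem octagon_subset_E₈ : octagon ⊆ E₈ := by
  have vertex : ∀ {v}, v ∈ ({![1, 0], ![2, 0], ![3, 1], ![3, 2], ![2, 3], ![1, 3], ![0, 2],
      ![0, 1]} : Set (Fin 2 → ℝ)) → v ∈ E₈ := fun hv => subset_convexHull ℝ _ hv
  have hC : Convex ℝ E₈ := convex_convexHull ℝ _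
  rintro u ⟨⟨h0, h3⟩, ⟨k0, k3⟩, ⟨s1, s5⟩, ⟨d2, d2'⟩⟩
  -- On each strip `k ≤ u 0 ≤ k + 1`, `u` lies on the vertical segment joining the points of
  -- abscissa `u 0` on the lower edge `p q` and on the upper edge `p' q'`.
  rcases le_total (u 0) 1 with hu | hu
  · have hd : 0 < 1 + 2 * u 0 := by linarith
    convert hC.lineMap_lineMap_mem (vertex (by simp)) (vertex (by simp)) (vertex (by simp))
      (vertex (by simp)) (p := ![0, 1]) (q := ![1, 0]) (p' := ![0, 2]) (q' := ![1, 3])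
      (a := u 0) (b := (u 1 - 1 + u 0) / (1 + 2 * u 0)) ⟨h0, hu⟩
      ⟨div_nonneg (by linarith) hd.le, by rw [div_le_one hd]; linarith⟩
    ext i
    fin_cases i <;> simp [AffineMap.lineMap_apply]
    field_simp
    ring
  rcases le_total (u 0) 2 with hu' | hu'
  · convert hC.lineMap_lineMap_mem (vertex (by simp)) (vertex (by simp)) (vertex (by simp))
      (vertex (by simp)) (p := ![1, 0]) (q := ![2, 0]) (p' := ![1, 3]) (q' := ![2, 3])
      (a := u 0 - 1) (b := u 1 / 3) ⟨by linarith, by linarith⟩ ⟨by linarith, by linarith⟩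
    ext i
    fin_cases i <;> simp [AffineMap.lineMap_apply]
    ring
  · have hd : 0 < 7 - u 0 * 2 := by linarith
    convert hC.lineMap_lineMap_mem (vertex (by simp)) (vertex (by simp)) (vertex (by simp))
      (vertex (by simp)) (p := ![2, 0]) (q := ![3, 1]) (p' := ![2, 3]) (q' := ![3, 2])
      (a := u 0 - 2) (b := (u 1 - u 0 + 2) / (7 - u 0 * 2)) ⟨by linarith, by linarith⟩
      ⟨div_nonneg (by linarith) hd.le, by rw [div_le_one hd]; linarith⟩
    ext i
    fin_cases i <;> simp [AffineMap.lineMap_apply]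
    · ring
    · field_simp
      ring

theorem E₈_eq_octagon : E₈ = octagon :=
  E₈_subset_octagon.antisymm octagon_subset_E₈

noncomputable def octagonOffsets (f : Fin 2 → ℝ) : Finset (Fin 2 → ℤ) :=
  ((Fintype.piFinset fun _ => Finset.Icc 0 2).erase
    (if 1 ≤ f 0 + f 1 then ![2, 2] else ![0, 0])).erase (if f 1 ≤ f 0 then ![2, 0] else ![0, 2])

theorem card_octagonOffsets (f : Fin 2 → ℝ) : (octagonOffsets f).card = 7 := by
  unfold octagonOffsets
  split_ifs <;> decide

theorem mem_octagonOffsets {f : Fin 2 → ℝ} {w : Fin 2 → ℤ} :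
    w ∈ octagonOffsets f ↔ (∀ i, w i ∈ Icc 0 2) ∧
      w ≠ (if 1 ≤ f 0 + f 1 then ![2, 2] else ![0, 0]) ∧
      w ≠ (if f 1 ≤ f 0 then ![2, 0] else ![0, 2]) := by
  simp [octagonOffsets, and_comm, and_assoc]

theorem add_mem_octagon_of_mem_octagonOffsets {f : Fin 2 → ℝ} (hf : ∀ i, f i ∈ Ico 0 1)
    {w : Fin 2 → ℤ} (hw : w ∈ octagonOffsets f) : (fun i => f i + w i) ∈ octagon := by
  obtain ⟨⟨s0, s1⟩, ⟨t0, t1⟩⟩ := And.intro (hf 0) (hf 1)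
  obtain ⟨hbox, hA, hB⟩ := mem_octagonOffsets.mp hw
  obtain ⟨⟨k0, k2⟩, ⟨l0, l2⟩⟩ := And.intro (hbox 0) (hbox 1)
  obtain ⟨k, l, rfl⟩ : ∃ k l : ℤ, w = ![k, l] := ⟨w 0, w 1, by ext i; fin_cases i <;> rfl⟩
  simp only [Matrix.cons_val_zero, Matrix.cons_val_one] at k0 k2 l0 l2
  refine ⟨⟨?_, ?_⟩, ⟨?_, ?_⟩, ⟨?_, ?_⟩, ⟨?_, ?_⟩⟩ <;>
    simp only [Matrix.cons_val_zero, Matrix.cons_val_one] <;>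
    interval_cases k <;> interval_cases l <;> split_ifs at hA hB <;>
    simp only [ne_eq, not_true_eq_false] at hA hB <;> push_cast <;> linarith

theorem mem_Icc_of_add_mem_Ioo {r : ℝ} (hr : r ∈ Ico 0 1) {m : ℤ} (h : r + m ∈ Ioo 0 3) :
    m ∈ Icc 0 2 := by
  obtain ⟨⟨r0, r1⟩, ⟨h0, h3⟩⟩ := And.intro hr h
  have hm0 : (-1 : ℝ) < m := by linarith
  have hm3 : (m : ℝ) < 3 := by linarith
  exact ⟨by exact_mod_cast hm0, Int.lt_add_one_iff.mp (by exact_mod_cast hm3)⟩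

theorem mem_octagonOffsets_of_add_mem_openOctagon {f : Fin 2 → ℝ} (hf : ∀ i, f i ∈ Ico 0 1)
    {w : Fin 2 → ℤ} (hw : (fun i => f i + w i) ∈ openOctagon) : w ∈ octagonOffsets f := by
  obtain ⟨hx, hy, ⟨s1, s5⟩, ⟨d2, d2'⟩⟩ := hw
  beta_reduce at s1 s5 d2 d2'
  refine mem_octagonOffsets.mpr ⟨Fin.forall_fin_two.mpr ⟨mem_Icc_of_add_mem_Ioo (hf 0) hx,
    mem_Icc_of_add_mem_Ioo (hf 1) hy⟩, ?_, ?_⟩ <;>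
  · split_ifs <;>
      simp only [Ne, funext_iff, Fin.forall_fin_two, Matrix.cons_val_zero, Matrix.cons_val_one] <;>
      rintro ⟨h0, h1⟩ <;> rw [h0, h1] at s1 s5 d2 d2' <;> push_cast at s1 s5 d2 d2' <;> linarith

/-- `E₈ + ℤ²` is a seven-fold lattice tiling of the plane. -/
theorem E8_sevenfold_tiling : IsKFoldTiling E₈ (intLattice 2) 7 := by
  intro x
  set f : Fin 2 → ℝ := fun i => Int.fract (x i)
  have hf : ∀ i, f i ∈ Ico 0 1 := fun i => ⟨Int.fract_nonneg _, Int.fract_lt_one _⟩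
  have card : (octagonOffsets f : Set (Fin 2 → ℤ)).encard = (7 : ℕ) := by
    rw [encard_coe_eq_coe_finsetCard, card_octagonOffsets]
  rw [encard_intLattice_translates, encard_intLattice_translates, E₈_eq_octagon, ← card]
  exact ⟨encard_mono fun w hw => add_mem_octagon_of_mem_octagonOffsets hf hw,
    encard_mono fun w hw =>
      mem_octagonOffsets_of_add_mem_openOctagon hf (interior_octagon_subset hw)⟩
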